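/- Canonicity for simply typed lambda calculus with Ans: every closed term t : Ans (in the empty context) is judgementally (βη) equal to yes or to no. -/
import Mathlib


/-! Simply typed lambda calculus with unit, products, functions and a base
type `Ans` with two constants `yes`, `no` (no eliminator), in intrinsically
typed de Bruijn representation, together with βη judgemental equality and
normal/neutral forms. -/

/-- Types of the STLC. -/
inductive Ty : Type
  | unit : Ty
  | ans : Ty
  | prod : Ty → Ty → Ty
  | arrow : Ty → Ty → Ty

/-- Contexts are lists of types (de Bruijn). -/
abbrev Ctx := List Ty

/-- Typed de Bruijn variables. -/
inductive Var : Ctx → Ty → Type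
  | zero {Γ A} : Var (A :: Γ) A
  | succ {Γ A B} : Var Γ A → Var (B :: Γ) A

/-- Well-typed terms. -/
inductive Tm : Ctx → Ty → Type
  | var {Γ A} : Var Γ A → Tm Γ A
  | yes {Γ} : Tm Γ .ans
  | no {Γ} : Tm Γ .ans
  | unit {Γ} : Tm Γ .unit
  | pair {Γ A B} : Tm Γ A → Tm Γ B → Tm Γ (.prod A B)
  | fst {Γ A B} : Tm Γ (.prod A B) → Tm Γ A
  | snd {Γ A B} : Tm Γ (.prod A B) → Tm Γ B
  | lam {Γ A B} : Tm (A :: Γ) B → Tm Γ (.arrow A B)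
  | app {Γ A B} : Tm Γ (.arrow A B) → Tm Γ A → Tm Γ B

/-- A renaming `Θ ⊢ σ : Γ` maps variables of `Γ` to variables of `Θ`. -/
def Ren (Θ Γ : Ctx) : Type := ∀ A, Var Γ A → Var Θ A

/-- Extend a renaming under a binder. -/
def Ren.lift {Θ Γ : Ctx} {A : Ty} (r : Ren Θ Γ) : Ren (A :: Θ) (A :: Γ) :=
  fun _ v =>
    match v with
    | .zero => .zero
    | .succ v => .succ (r _ v)

/-- The weakening renaming. -/
def Ren.wk {Γ : Ctx} {A : Ty} : Ren (A :: Γ) Γ := fun _ v => .succ v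

/-- Action of renamings on terms. -/
def rename {Θ Γ : Ctx} (r : Ren Θ Γ) : ∀ {A}, Tm Γ A → Tm Θ A
  | _, .var v => .var (r _ v)
  | _, .yes => .yes
  | _, .no => .no
  | _, .unit => .unit
  | _, .pair a b => .pair (rename r a) (rename r b)
  | _, .fst p => .fst (rename r p)
  | _, .snd p => .snd (rename r p)
  | _, .lam t => .lam (rename r.lift t)
  | _, .app f a => .app (rename r f) (rename r a)

/-- A substitution `Θ ⊢ σ : Γ` maps variables of `Γ` to terms over `Θ`. -/
def Subst (Θ Γ : Ctx) : Type := ∀ A, Var Γ A → Tm Θ A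

/-- Extend a substitution under a binder. -/
def Subst.lift {Θ Γ : Ctx} {A : Ty} (s : Subst Θ Γ) : Subst (A :: Θ) (A :: Γ) :=
  fun _ v =>
    match v with
    | .zero => .var .zero
    | .succ v => rename Ren.wk (s _ v)

/-- Action of substitutions on terms. -/
def subst {Θ Γ : Ctx} (s : Subst Θ Γ) : ∀ {A}, Tm Γ A → Tm Θ A
  | _, .var v => s _ v
  | _, .yes => .yes
  | _, .no => .no
  | _, .unit => .unit
  | _, .pair a b => .pair (subst s a) (subst s b)
  | _, .fst p => .fst (subst s p)
  | _, .snd p => .snd (subst s p)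
  | _, .lam t => .lam (subst s.lift t)
  | _, .app f a => .app (subst s f) (subst s a)

/-- The substitution sending the last variable to `a` and the others to
themselves. -/
def Subst.single {Γ : Ctx} {A : Ty} (a : Tm Γ A) : Subst Γ (A :: Γ)
  | _, .zero => a
  | _, .succ v => .var v

/-- Substitution of a single term for the last variable. -/
def subst1 {Γ : Ctx} {A B : Ty} (a : Tm Γ A) (t : Tm (A :: Γ) B) : Tm Γ B :=
  subst (Subst.single a) t

/-- βη judgemental equality of well-typed terms. -/
inductive Jeq : ∀ {Γ : Ctx} {A : Ty}, Tm Γ A → Tm Γ A → Prop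
  | refl {Γ A} (t : Tm Γ A) : Jeq t t
  | symm {Γ A} {t s : Tm Γ A} : Jeq t s → Jeq s t
  | trans {Γ A} {t s u : Tm Γ A} : Jeq t s → Jeq s u → Jeq t u
  | pair_congr {Γ A B} {a a' : Tm Γ A} {b b' : Tm Γ B} :
      Jeq a a' → Jeq b b' → Jeq (.pair a b) (.pair a' b')
  | fst_congr {Γ A B} {p p' : Tm Γ (.prod A B)} : Jeq p p' → Jeq (.fst p) (.fst p')
  | snd_congr {Γ A B} {p p' : Tm Γ (.prod A B)} : Jeq p p' → Jeq (.snd p) (.snd p')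
  | lam_congr {Γ A B} {t t' : Tm (A :: Γ) B} : Jeq t t' → Jeq (.lam t) (.lam t')
  | app_congr {Γ A B} {f f' : Tm Γ (.arrow A B)} {a a' : Tm Γ A} :
      Jeq f f' → Jeq a a' → Jeq (.app f a) (.app f' a')
  | beta {Γ A B} (t : Tm (A :: Γ) B) (a : Tm Γ A) :
      Jeq (.app (.lam t) a) (subst1 a t)
  | eta {Γ A B} (f : Tm Γ (.arrow A B)) :
      Jeq f (.lam (.app (rename Ren.wk f) (.var .zero)))
  | beta_fst {Γ A B} (a : Tm Γ A) (b : Tm Γ B) : Jeq (.fst (.pair a b)) a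
  | beta_snd {Γ A B} (a : Tm Γ A) (b : Tm Γ B) : Jeq (.snd (.pair a b)) b
  | eta_pair {Γ A B} (p : Tm Γ (.prod A B)) : Jeq p (.pair (.fst p) (.snd p))
  | eta_unit {Γ} (t : Tm Γ .unit) : Jeq t .unit

mutual
  /-- Normal forms. -/
  inductive Nf : ∀ {Γ : Ctx} {A : Ty}, Tm Γ A → Prop
    | yes {Γ} : Nf (.yes : Tm Γ .ans)
    | no {Γ} : Nf (.no : Tm Γ .ans)
    | unit {Γ} : Nf (.unit : Tm Γ .unit)
    | pair {Γ A B} {a : Tm Γ A} {b : Tm Γ B} : Nf a → Nf b → Nf (.pair a b)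
    | lam {Γ A B} {t : Tm (A :: Γ) B} : Nf t → Nf (.lam t)
    | ne_ans {Γ} {t : Tm Γ .ans} : Ne' t → Nf t

  /-- Neutral forms. -/
  inductive Ne' : ∀ {Γ : Ctx} {A : Ty}, Tm Γ A → Prop
    | var {Γ A} (v : Var Γ A) : Ne' (.var v)
    | fst {Γ A B} {p : Tm Γ (.prod A B)} : Ne' p → Ne' (.fst p)
    | snd {Γ A B} {p : Tm Γ (.prod A B)} : Ne' p → Ne' (.snd p)
    | app {Γ A B} {f : Tm Γ (.arrow A B)} {a : Tm Γ A} :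
        Ne' f → Nf a → Ne' (.app f a)
end

/-! Auxiliary lemmas for canonicity -/

theorem Ren.lift_comp {Θ Γ Δ : Ctx} {A : Ty} (r : Ren Θ Γ) (r' : Ren Γ Δ) :
    (Ren.lift (A := A) fun B v => r B (r' B v)) =
      fun B v => r.lift B (Ren.lift (A := A) r' B v) := by
  funext B v; cases v <;> rfl

theorem rename_rename {Θ Γ Δ : Ctx} (r : Ren Θ Γ) (r' : Ren Γ Δ) :
    ∀ {A} (t : Tm Δ A), rename r (rename r' t) = rename (fun B v => r B (r' B v)) t
  | _, .var v => rfl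
  | _, .yes => rfl
  | _, .no => rfl
  | _, .unit => rfl
  | _, .pair a b => by simp [rename, rename_rename r r' a, rename_rename r r' b]
  | _, .fst p => by simp [rename, rename_rename r r' p]
  | _, .snd p => by simp [rename, rename_rename r r' p]
  | _, .lam t => by
      simp [rename, rename_rename r.lift r'.lift t, Ren.lift_comp]
  | _, .app f a => by simp [rename, rename_rename r r' f, rename_rename r r' a]

theorem Subst.lift_ren {Θ Γ Δ : Ctx} {A : Ty} (s : Subst Θ Γ) (r : Ren Γ Δ) :
    (Subst.lift (A := A) fun B v => s B (r B v)) =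
      fun B v => s.lift B (Ren.lift (A := A) r B v) := by
  funext B v; cases v <;> rfl

theorem subst_rename {Θ Γ Δ : Ctx} (s : Subst Θ Γ) (r : Ren Γ Δ) :
    ∀ {A} (t : Tm Δ A), subst s (rename r t) = subst (fun B v => s B (r B v)) t
  | _, .var v => rfl
  | _, .yes => rfl
  | _, .no => rfl
  | _, .unit => rfl
  | _, .pair a b => by simp [rename, subst, subst_rename s r a, subst_rename s r b]
  | _, .fst p => by simp [rename, subst, subst_rename s r p]
  | _, .snd p => by simp [rename, subst, subst_rename s r p]
  | _, .lam t => by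
      simp [rename, subst, subst_rename s.lift r.lift t, Subst.lift_ren]
  | _, .app f a => by simp [rename, subst, subst_rename s r f, subst_rename s r a]

theorem Subst.ren_lift {Θ Γ Δ : Ctx} {A : Ty} (r : Ren Θ Γ) (s : Subst Γ Δ) :
    (Subst.lift (A := A) fun B v => rename r (s B v)) =
      fun B v => rename (Ren.lift (A := A) r) (s.lift B v) := by
  funext B v
  cases v with
  | zero => rfl
  | succ v =>
      show rename Ren.wk (rename r _) = rename r.lift (rename Ren.wk _)
      rw [rename_rename, rename_rename]; rfl

theorem rename_subst {Θ Γ Δ : Ctx} (r : Ren Θ Γ) (s : Subst Γ Δ) :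
    ∀ {A} (t : Tm Δ A), rename r (subst s t) = subst (fun B v => rename r (s B v)) t
  | _, .var v => rfl
  | _, .yes => rfl
  | _, .no => rfl
  | _, .unit => rfl
  | _, .pair a b => by simp [rename, subst, rename_subst r s a, rename_subst r s b]
  | _, .fst p => by simp [rename, subst, rename_subst r s p]
  | _, .snd p => by simp [rename, subst, rename_subst r s p]
  | _, .lam t => by
      simp [rename, subst, rename_subst r.lift s.lift t, Subst.ren_lift]
  | _, .app f a => by simp [rename, subst, rename_subst r s f, rename_subst r s a]

theorem Subst.lift_comp {Θ Γ Δ : Ctx} {A : Ty} (s : Subst Θ Γ) (s' : Subst Γ Δ) :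
    (Subst.lift (A := A) fun B v => subst s (s' B v)) =
      fun B v => subst s.lift (Subst.lift (A := A) s' B v) := by
  funext B v
  cases v with
  | zero => rfl
  | succ v =>
      show rename Ren.wk (subst s _) = subst s.lift (rename Ren.wk _)
      rw [rename_subst, subst_rename]; rfl

theorem subst_subst {Θ Γ Δ : Ctx} (s : Subst Θ Γ) (s' : Subst Γ Δ) :
    ∀ {A} (t : Tm Δ A), subst s (subst s' t) = subst (fun B v => subst s (s' B v)) t
  | _, .var v => rfl
  | _, .yes => rfl
  | _, .no => rfl
  | _, .unit => rfl
  | _, .pair a b => by simp [subst, subst_subst s s' a, subst_subst s s' b]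
  | _, .fst p => by simp [subst, subst_subst s s' p]
  | _, .snd p => by simp [subst, subst_subst s s' p]
  | _, .lam t => by
      simp [subst, subst_subst s.lift s'.lift t, Subst.lift_comp]
  | _, .app f a => by simp [subst, subst_subst s s' f, subst_subst s s' a]

/-- The identity substitution. -/
def Subst.id (Γ : Ctx) : Subst Γ Γ := fun _ v => .var v

theorem Subst.lift_id {Γ : Ctx} {A : Ty} :
    (Subst.id Γ).lift (A := A) = Subst.id (A :: Γ) := by
  funext B v; cases v <;> rfl

theorem subst_id {Γ : Ctx} : ∀ {A} (t : Tm Γ A), subst (Subst.id Γ) t = t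
  | _, .var v => rfl
  | _, .yes => rfl
  | _, .no => rfl
  | _, .unit => rfl
  | _, .pair a b => by simp [subst, subst_id a, subst_id b]
  | _, .fst p => by simp [subst, subst_id p]
  | _, .snd p => by simp [subst, subst_id p]
  | _, .lam t => by simp [subst, Subst.lift_id, subst_id t]
  | _, .app f a => by simp [subst, subst_id f, subst_id a]

/-- Extend a closed substitution with a term for the last variable. -/
def Subst.cons {Θ Γ : Ctx} {A : Ty} (a : Tm Θ A) (s : Subst Θ Γ) : Subst Θ (A :: Γ) :=
  fun _ v => match v with
  | .zero => a
  | .succ v => s _ v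

theorem subst1_lift {Θ Γ : Ctx} {A B : Ty} (a : Tm Θ A) (s : Subst Θ Γ)
    (t : Tm (A :: Γ) B) :
    subst1 a (subst s.lift t) = subst (Subst.cons a s) t := by
  unfold subst1
  rw [subst_subst]
  congr 1
  funext C v
  cases v with
  | zero => rfl
  | succ v =>
      show subst (Subst.single a) (rename Ren.wk (s C v)) = s C v
      rw [subst_rename]
      exact subst_id (s C v)

/-- The computability predicate (logical relation) on closed terms. -/
def Comp : ∀ (A : Ty), Tm [] A → Prop
  | .unit, _ => True
  | .ans, t => Jeq t .yes ∨ Jeq t .no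
  | .prod A B, t => Comp A (.fst t) ∧ Comp B (.snd t)
  | .arrow A B, t => ∀ a : Tm [] A, Comp A a → Comp B (.app t a)

theorem Comp.jeq : ∀ (A : Ty) {t t' : Tm [] A}, Jeq t t' → Comp A t → Comp A t'
  | .unit, _, _, _, _ => trivial
  | .ans, _, _, h, hc => hc.imp (fun j => h.symm.trans j) (fun j => h.symm.trans j)
  | .prod A B, _, _, h, hc =>
      ⟨Comp.jeq A (Jeq.fst_congr h) hc.1, Comp.jeq B (Jeq.snd_congr h) hc.2⟩
  | .arrow A B, _, _, h, hc => fun a ha =>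
      Comp.jeq B (Jeq.app_congr h (Jeq.refl a)) (hc a ha)

/-- Fundamental lemma of the logical relation. -/
theorem fundamental {Γ : Ctx} :
    ∀ {A} (t : Tm Γ A) (s : Subst [] Γ), (∀ B v, Comp B (s B v)) → Comp A (subst s t)
  | _, .var v, s, hs => hs _ v
  | _, .yes, _, _ => Or.inl (Jeq.refl _)
  | _, .no, _, _ => Or.inr (Jeq.refl _)
  | _, .unit, _, _ => trivial
  | _, .pair a b, s, hs =>
      ⟨Comp.jeq _ (Jeq.symm (Jeq.beta_fst _ _)) (fundamental a s hs),
       Comp.jeq _ (Jeq.symm (Jeq.beta_snd _ _)) (fundamental b s hs)⟩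
  | _, .fst p, s, hs => (fundamental p s hs).1
  | _, .snd p, s, hs => (fundamental p s hs).2
  | _, .lam t, s, hs => fun a ha => by
      have h := fundamental t (Subst.cons a s) (fun B v => by
        cases v with
        | zero => exact ha
        | succ v => exact hs _ v)
      have : Jeq (Tm.app (subst s (.lam t)) a) (subst (Subst.cons a s) t) := by
        rw [← subst1_lift a s t]
        exact Jeq.beta _ _
      exact Comp.jeq _ this.symm h
  | _, .app f a, s, hs => fundamental f s hs _ (fundamental a s hs)

/-- Canonicity: every closed term of type `Ans` is judgementally (βη) equal
either to `yes` or to `no`. -/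
theorem canonicity (t : Tm [] .ans) : Jeq t Tm.yes ∨ Jeq t Tm.no := by
  have h := fundamental t (Subst.id []) (fun B v => by cases v)
  rwa [subst_id] at h
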